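/- Let $p$ be a prime and consider the $p$ sequences of $\mathcal{C}_0(p, 2p-1)$, each of period $p(2p-1)$. Form a $p \times p(2p-1)$ binary matrix $\mathbf{F}$ whose $i$-th row is an arbitrary cyclic shift of the $i$-th sequence. Then among any $2p$ consecutive columns of $\mathbf{F}$ (indices taken cyclically), at least one column is entirely zero. -/

import Mathlib

/-- Membership in the characteristic set `I_g` of the CRT sequence `S_g`. -/
def igMem (p q g l : ℕ) : Bool :=
  (List.range p).any fun j => decide (l % p = (j * g) % p ∧ l % q = j)

/-- Membership in the characteristic set `I_*` of the sequence `S_*`. -/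
def istarMem (p q l : ℕ) : Bool :=
  (List.range p).any fun j => decide (l % p = j ∧ l % q = 0)

/-- The characteristic function of a member of `C_0(p,q)`: `none` stands for
`S_*` and `some g` for the CRT sequence `S_g`. -/
def c0Mem (p q : ℕ) (o : Option ℕ) (l : ℕ) : Bool :=
  o.elim (istarMem p q l) (fun g => igMem p q g l)

/-- An index is a valid member of `C_0(p,q)` if it is `S_*` or `S_g` with
`g ∈ {0} ∪ {2, …, p-1}`. -/
def c0Valid (p : ℕ) (o : Option ℕ) : Prop :=
  o.elim True (fun g => g = 0 ∨ (2 ≤ g ∧ g < p))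

open Finset

/-!
Every row has its ones at least `p` apart, so it meets a window of `2p` columns at most twice,
and the `p` rows cover the window only if each meets it twice and no two share a column. But two
ones of `S_*` in the window are `2p - 1` apart, hence in its first and last column, while two
ones of `S_{2 mod p}` are `2p - 2` apart; so these two rows share a column.
-/

lemma istarMem_iff {p q l : ℕ} (hp : 0 < p) : istarMem p q l = true ↔ l % q = 0 := by
  simp only [istarMem, List.any_eq_true, List.mem_range, decide_eq_true_eq]
  exact ⟨fun ⟨_, _, _, h⟩ => h, fun h => ⟨l % p, Nat.mod_lt _ hp, rfl, h⟩⟩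

lemma igMem_iff {p q g l : ℕ} :
    igMem p q g l = true ↔ l % q < p ∧ (l : ZMod p) = (l % q : ℕ) * g := by
  simp only [igMem, List.any_eq_true, List.mem_range, decide_eq_true_eq, ← Nat.cast_mul,
    ZMod.natCast_eq_natCast_iff' _ _ p]
  constructor
  · rintro ⟨j, hj, h, rfl⟩
    exact ⟨hj, h⟩
  · rintro ⟨hlt, h⟩
    exact ⟨l % q, hlt, h, rfl⟩

lemma c0Mem_mod_mul (p q : ℕ) (o : Option ℕ) (l : ℕ) :
    c0Mem p q o (l % (p * q)) = c0Mem p q o l := by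
  cases o <;> simp only [c0Mem, Option.elim, istarMem, igMem, Nat.mod_mul_right_mod,
    Nat.mod_mul_left_mod]

lemma c0Valid_iff_mem_insertNone {p : ℕ} {o : Option ℕ} (hp : 0 < p) :
    c0Valid p o ↔ o ∈ insertNone ((range p).erase 1) := by
  cases o with
  | none => simp [c0Valid]
  | some g =>
    simp only [c0Valid, Option.elim, some_mem_insertNone, mem_erase, mem_range]
    omega

lemma Nat.add_mod_eq_or {q x d : ℕ} (h : x % q + d < 2 * q) :
    (x + d) % q = x % q + d ∨ (x + d) % q + q = x % q + d := by
  rw [← Nat.mod_add_mod]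
  rcases lt_or_ge (x % q + d) q with h' | h'
  · exact .inl (Nat.mod_eq_of_lt h')
  · rw [Nat.mod_eq_sub_mod h', Nat.mod_eq_of_lt (by omega)]
    omega

lemma exists_mem_lt_of_one_lt_card {α : Type*} [LinearOrder α] {s : Finset α} (h : 1 < #s) :
    ∃ x ∈ s, ∃ y ∈ s, x < y := by
  obtain ⟨a, ha, b, hb, hab⟩ := one_lt_card.1 h
  rcases hab.lt_or_gt with hab | hab
  exacts [⟨a, ha, b, hb, hab⟩, ⟨b, hb, a, ha, hab⟩]

section CRT

variable {p g x d : ℕ}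

/-- Below `p` the residues mod `2p - 1` of the two positions differ by `d` as well, so that
`d ≡ d g (mod p)`. -/
lemma le_of_igMem_of_igMem_add (hp : p.Prime) (hg : (g : ZMod p) ≠ 1)
    (hx : igMem p (2 * p - 1) g x) (hy : igMem p (2 * p - 1) g (x + d)) (hd : 0 < d) :
    p ≤ d := by
  by_contra! hdp
  rw [igMem_iff] at hx hy
  have hres : (x + d) % (2 * p - 1) = x % (2 * p - 1) + d := by
    rcases Nat.add_mod_eq_or (q := 2 * p - 1) (x := x) (d := d) (by omega) with h | h
    · exact h
    · omega
  have hy' := hy.2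
  rw [hres] at hy'
  push_cast at hy'
  have hzero : (d : ZMod p) * (g - 1) = 0 := by linear_combination hx.2 - hy'
  have := Fact.mk hp
  rcases mul_eq_zero.1 hzero with h | h
  · exact absurd (Nat.le_of_dvd hd ((ZMod.natCast_eq_zero_iff _ _).1 h)) (by omega)
  · exact hg (sub_eq_zero.1 h)

/-- For `p ≤ d < 2p` the residue mod `2p - 1` wraps around, and `2p - 1 ≡ -1 (mod p)` turns
`d ≡ 2 (d - (2p - 1)) (mod p)` into `p ∣ d + 2`. -/
lemma eq_of_igMem_of_igMem_add (hp : p.Prime) (hg : (g : ZMod p) = 2)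
    (hx : igMem p (2 * p - 1) g x) (hy : igMem p (2 * p - 1) g (x + d)) (hd : 0 < d)
    (hd2 : d < 2 * p) : d = 2 * p - 2 := by
  have := Fact.mk hp
  have hpd : p ≤ d := le_of_igMem_of_igMem_add hp (by
    rw [hg]; intro h; exact one_ne_zero (by linear_combination h : (1 : ZMod p) = 0)) hx hy hd
  rw [igMem_iff] at hx hy
  have hres : (x + d) % (2 * p - 1) + (2 * p - 1) = x % (2 * p - 1) + d := by
    rcases Nat.add_mod_eq_or (q := 2 * p - 1) (x := x) (d := d) (by omega) with h | h
    · omega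
    · exact h
  have hq : ((2 * p - 1 : ℕ) : ZMod p) = -1 := by
    rw [Nat.cast_sub (by omega)]; simp
  have hc := congrArg (Nat.cast : ℕ → ZMod p) hres
  push_cast [hq] at hc
  rw [hg] at hx hy
  have hy' := hy.2
  push_cast at hy'
  obtain ⟨k, hk⟩ : p ∣ d + 2 := (ZMod.natCast_eq_zero_iff _ _).1 (by
    push_cast
    linear_combination hx.2 - hy' - 2 * hc)
  have hk1 : 1 < k := Nat.lt_of_mul_lt_mul_left (a := p) (by omega)
  have hk3 : k < 3 := Nat.lt_of_mul_lt_mul_left (a := p) (by have := hp.two_le; omega)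
  obtain rfl : k = 2 := by omega
  omega

end CRT

lemma card_le_of_forall_add_le {p k : ℕ} {T : Finset ℕ} (hp : 0 < p) (hT : T ⊆ range (k * p))
    (hsep : ∀ x ∈ T, ∀ y ∈ T, x < y → x + p ≤ y) : #T ≤ k := by
  have hmono : StrictMonoOn (· / p) (T : Set ℕ) := fun x hx y hy hxy =>
    calc x / p < x / p + 1 := Nat.lt_succ_self _
      _ = (x + p) / p := (Nat.add_div_right x hp).symm
      _ ≤ y / p := Nat.div_le_div_right (hsep x hx y hy hxy)
  calc #T ≤ #(range k) := card_le_card_of_injOn (· / p)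
        (fun t ht => mem_range.2 ((Nat.div_lt_iff_lt_mul hp).2 (mem_range.1 (hT ht)))) hmono.injOn
    _ = k := card_range k

lemma card_biUnion_lt_two_mul {ι α : Type*} [DecidableEq ι] [DecidableEq α] {R : Finset ι}
    {T : ι → Finset α} {i j : ι} (hi : i ∈ R) (hj : j ∈ R) (hij : i ≠ j)
    (h2 : ∀ k ∈ R, #(T k) ≤ 2) (h3 : #(T i ∪ T j) ≤ 3) : #(R.biUnion T) < 2 * #R := by
  set R' := (R.erase i).erase j
  have hR : R = insert i (insert j R') := by
    rw [insert_erase (mem_erase.2 ⟨hij.symm, hj⟩), insert_erase hi]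
  have hR' : #R' + 2 = #R := by
    rw [card_erase_of_mem (mem_erase.2 ⟨hij.symm, hj⟩), card_erase_of_mem hi]
    have := one_lt_card.2 ⟨i, hi, j, hj, hij⟩
    omega
  calc #(R.biUnion T) = #(T i ∪ T j ∪ R'.biUnion T) := by
        rw [hR, biUnion_insert, biUnion_insert, union_assoc]
    _ ≤ #(T i ∪ T j) + #(R'.biUnion T) := card_union_le _ _
    _ ≤ 3 + #R' * 2 := add_le_add h3 (card_biUnion_le_card_mul _ _ _ fun k hk =>
        h2 k (mem_of_mem_erase (mem_of_mem_erase hk)))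
    _ < 2 * #R := by omega

lemma card_union_le_three {p : ℕ} {A B : Finset ℕ} (hA2 : #A ≤ 2) (hB2 : #B ≤ 2)
    (hA : ∀ x ∈ A, ∀ y ∈ A, x < y → x = 0 ∧ y = 2 * p - 1)
    (hB : ∀ x ∈ B, ∀ y ∈ B, x < y → y = x + (2 * p - 2)) (hBlt : B ⊆ range (2 * p)) :
    #(A ∪ B) ≤ 3 := by
  by_contra! h
  have hAB := card_union_add_card_inter A B
  have hdisj : Disjoint A B := disjoint_iff_inter_eq_empty.2 (card_eq_zero.1 (by omega))
  obtain ⟨x, hx, y, hy, hxy⟩ := exists_mem_lt_of_one_lt_card (s := A) (by omega)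
  obtain ⟨u, hu, v, hv, huv⟩ := exists_mem_lt_of_one_lt_card (s := B) (by omega)
  obtain ⟨rfl, rfl⟩ := hA x hx y hy hxy
  have hvu := hB u hu v hv huv
  have hv2 := mem_range.1 (hBlt hv)
  rcases Nat.lt_or_ge u 1 with hu0 | hu1
  · exact disjoint_left.1 hdisj hx (by rwa [Nat.lt_one_iff.1 hu0] at hu)
  · exact disjoint_left.1 hdisj hy (by rwa [show v = 2 * p - 1 by omega] at hv)

def rowHits (p a : ℕ) (o : Option ℕ) : Finset ℕ :=
  {t ∈ range (2 * p) | c0Mem p (2 * p - 1) o (a + t)}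

section Window

variable {p a x y : ℕ}

lemma mem_rowHits {t : ℕ} {o : Option ℕ} :
    t ∈ rowHits p a o ↔ t < 2 * p ∧ c0Mem p (2 * p - 1) o (a + t) := by
  simp [rowHits]

lemma rowHits_none_pair (hp : 0 < p) (hx : x ∈ rowHits p a none) (hy : y ∈ rowHits p a none)
    (hxy : x < y) : x = 0 ∧ y = 2 * p - 1 := by
  obtain ⟨-, hxm⟩ := mem_rowHits.1 hx
  obtain ⟨hy2, hym⟩ := mem_rowHits.1 hy
  rw [c0Mem, Option.elim, istarMem_iff hp] at hxm hym
  have hdvd : 2 * p - 1 ∣ y - x := by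
    have := Nat.sub_mod_eq_zero_of_mod_eq (hym.trans hxm.symm)
    rw [Nat.add_sub_add_left] at this
    exact Nat.dvd_of_mod_eq_zero this
  have := Nat.le_of_dvd (by omega) hdvd
  omega

lemma rowHits_some_pair {g : ℕ} (hp : p.Prime) (hg : (g : ZMod p) = 2)
    (hx : x ∈ rowHits p a (some g)) (hy : y ∈ rowHits p a (some g)) (hxy : x < y) :
    y = x + (2 * p - 2) := by
  obtain ⟨-, hxm⟩ := mem_rowHits.1 hx
  obtain ⟨hy2, hym⟩ := mem_rowHits.1 hy
  obtain ⟨d, rfl⟩ := Nat.exists_eq_add_of_le hxy.le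
  rw [← add_assoc] at hym
  have := eq_of_igMem_of_igMem_add hp hg hxm hym (by omega) (by omega)
  omega

lemma add_le_of_mem_rowHits {o : Option ℕ} (hp : p.Prime) (ho : c0Valid p o)
    (hx : x ∈ rowHits p a o) (hy : y ∈ rowHits p a o) (hxy : x < y) : x + p ≤ y := by
  cases o with
  | none =>
    have := rowHits_none_pair hp.pos hx hy hxy
    omega
  | some g =>
    obtain ⟨-, hxm⟩ := mem_rowHits.1 hx
    obtain ⟨-, hym⟩ := mem_rowHits.1 hy
    obtain ⟨d, rfl⟩ := Nat.exists_eq_add_of_le hxy.le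
    rw [← add_assoc] at hym
    have hg : (g : ZMod p) ≠ 1 := by
      rw [← Nat.cast_one, Ne, ZMod.natCast_eq_natCast_iff', Nat.mod_eq_of_lt hp.one_lt]
      simp only [c0Valid, Option.elim] at ho
      rcases ho with rfl | ⟨hg2, hgp⟩
      · simp
      · rw [Nat.mod_eq_of_lt hgp]; omega
    have := le_of_igMem_of_igMem_add hp hg hxm hym (by omega)
    omega

lemma card_rowHits_le {o : Option ℕ} (hp : p.Prime) (ho : c0Valid p o) :
    #(rowHits p a o) ≤ 2 :=
  card_le_of_forall_add_le hp.pos (filter_subset _ _) fun _ hx _ hy =>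
    add_le_of_mem_rowHits hp ho hx hy

end Window

/-- Shift each of the `p` sequences of `C_0(p, 2p-1)` cyclically by an arbitrary
amount `s o`, and stack them as the rows of a `p × p(2p-1)` matrix `F` (the entry
of row `o` in column `m` being the value of the shifted sequence at `m`).  Then
among any `2p` consecutive columns of `F` (taken cyclically) at least one column
is entirely zero. -/
theorem c0_zero_column_in_window (p : ℕ) (hp : p.Prime) (s : Option ℕ → ℕ)
    (c : ℕ) :
    ∃ t < 2 * p, ∀ o : Option ℕ, c0Valid p o →
      c0Mem p (2 * p - 1) o ((c + t + s o) % (p * (2 * p - 1))) = false := by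
  by_contra! hcover
  have hp2 := hp.two_le
  let T : Option ℕ → Finset ℕ := fun o => rowHits p (c + s o) o
  set R := insertNone ((range p).erase 1)
  have hR : ∀ {o}, c0Valid p o ↔ o ∈ R := c0Valid_iff_mem_insertNone hp.pos
  have hsub : range (2 * p) ⊆ R.biUnion T := by
    intro t ht
    obtain ⟨o, ho, hmem⟩ := hcover t (mem_range.1 ht)
    rw [Ne, Bool.not_eq_false, c0Mem_mod_mul, add_right_comm] at hmem
    exact mem_biUnion.2 ⟨o, hR.1 ho, mem_filter.2 ⟨ht, hmem⟩⟩
  -- `S_2`, or `S_0` when `p = 2`: its two ones in a window are `2p - 2` apart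
  set g := 2 % p
  have hg : (g : ZMod p) = 2 := by simp [g, ZMod.natCast_mod]
  have hgR : some g ∈ R := hR.1 <| by
    rcases hp2.eq_or_lt with rfl | hp3
    · exact .inl rfl
    · exact .inr (by simp only [g, Nat.mod_eq_of_lt hp3]; omega)
  have hlt : #(R.biUnion T) < 2 * #R :=
    card_biUnion_lt_two_mul none_mem_insertNone hgR (by simp)
      (fun o ho => card_rowHits_le hp (hR.2 ho))
    (card_union_le_three (card_rowHits_le (o := none) hp trivial) (card_rowHits_le hp (hR.2 hgR))
      (fun _ hx _ hy => rowHits_none_pair hp.pos hx hy)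
      (fun _ hx _ hy => rowHits_some_pair hp hg hx hy) (filter_subset _ _))
  have hRcard : #R = p := by
    rw [card_insertNone, card_erase_of_mem (mem_range.2 hp.one_lt), card_range]
    omega
  have := card_le_card hsub
  rw [card_range] at this
  omega
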